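/- arXiv:2006.07646 — 3 statements merged into one kernel-verified Lean document; each statement's English description precedes it below -/
import Mathlib

section
/- For every continuous function f : {0,1}^ℕ → ℂ (product topology), the sequence n ↦ f(Sⁿ 𝛍²) is Besicovitch almost periodic, where S is the left shift on {0,1}^ℕ and 𝛍² = (μ²(n))_{n≥1}. -/
/-!
A continuous function on `{0,1}^ℕ` is, up to `ε`, a function of finitely many coordinates.
Let `𝛍²_K` be the indicator of the integers with no square factor `d²`, `2 ≤ d ≤ K`. It is
periodic with period `(K!)²` and differs from `𝛍²` only at multiples of some `d²` with `d > K`,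
a set of upper density at most `∑_{d > K} d⁻² ≤ 2 / (K + 1)`. Hence `n ↦ f (Sⁿ 𝛍²)` is
Besicovitch-close to the periodic sequence `n ↦ f (Sⁿ 𝛍²_K)`, and a periodic sequence is a
trigonometric polynomial by discrete Fourier inversion on `ℤ/Qℤ`.
-/

open MeasureTheory Filter Finset

/-- A sequence `φ : ℕ → ℂ` is Besicovitch almost periodic if it can be approximated
arbitrarily well, in the Besicovitch seminorm, by trigonometric polynomials. -/
def BesicovitchAlmostPeriodic (φ : ℕ → ℂ) : Prop :=
  ∀ ε : ℝ, 0 < ε → ∃ (M : ℕ) (c : Fin M → ℂ) (α : Fin M → ℝ),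
    Filter.limsup (fun N : ℕ => (N : ℝ)⁻¹ * ∑ t ∈ Finset.Icc 1 N,
        ‖φ t - ∑ m : Fin M, c m * Complex.exp (Complex.I * (α m) * t)‖)
      Filter.atTop < ε

/-- The left shift on `{0,1}^ℕ`. -/
def shift₂ (x : ℕ → Fin 2) : ℕ → Fin 2 := fun k => x (k + 1)

/-- The point `𝛍² = (μ²(n))_{n ≥ 1}` of `{0,1}^ℕ`: the `k`-th coordinate (`k ≥ 0`)
is `1` if `k+1` is squarefree and `0` otherwise. -/
noncomputable def muSq : ℕ → Fin 2 := fun k => if Squarefree (k + 1) then 1 else 0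

open ZMod in
theorem Function.Periodic.exists_eq_sum_exp {ψ : ℕ → ℂ} {Q : ℕ} (hQ : 0 < Q)
    (h : Function.Periodic ψ Q) :
    ∃ (c : Fin Q → ℂ) (α : Fin Q → ℝ), ∀ t : ℕ,
      ψ t = ∑ m : Fin Q, c m * Complex.exp (Complex.I * α m * t) := by
  have : NeZero Q := ⟨hQ.ne'⟩
  let e : Fin Q ≃ ZMod Q := (ZMod.finEquiv Q).toEquiv
  let Φ : ZMod Q → ℂ := fun j => ψ j.val
  refine ⟨fun m => (Q : ℂ)⁻¹ * 𝓕 Φ (e m), fun m => 2 * Real.pi * (e m).val / Q,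
    fun t => ?_⟩
  have hΦ : ψ t = Φ t := by
    simp only [Φ, ZMod.val_natCast]
    conv_lhs => rw [← Nat.mod_add_div' t Q]
    exact h.nat_mul _ _
  have hchar (j : ZMod Q) : stdAddChar (j * (t : ZMod Q)) =
      Complex.exp (Complex.I * (2 * Real.pi * j.val / Q : ℝ) * t) := by
    conv_lhs =>
      rw [← ZMod.natCast_zmod_val j, ← Nat.cast_mul, stdAddChar_apply, toCircle_natCast]
    congr 1
    push_cast
    ring
  conv_lhs => rw [hΦ, ← LinearEquiv.symm_apply_apply dft Φ, invDFT_apply]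
  rw [smul_eq_mul, Finset.mul_sum, ← e.sum_comp]
  refine Finset.sum_congr rfl fun m _ => ?_
  rw [smul_eq_mul, hchar]
  ring

theorem BesicovitchAlmostPeriodic.of_forall_exists_periodic {φ : ℕ → ℂ}
    (h : ∀ ε > 0, ∃ Q > 0, ∃ ψ : ℕ → ℂ, Function.Periodic ψ Q ∧
      ∀ᶠ N in atTop, ∑ t ∈ Icc 1 N, dist (φ t) (ψ t) ≤ N * ε) :
    BesicovitchAlmostPeriodic φ := by
  intro ε hε
  obtain ⟨Q, hQ, ψ, hψ, hN⟩ := h (ε / 2) (half_pos hε)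
  obtain ⟨c, α, hcα⟩ := hψ.exists_eq_sum_exp hQ
  refine ⟨Q, c, α, lt_of_le_of_lt ?_ (half_lt_self hε)⟩
  simp_rw [← hcα, ← dist_eq_norm]
  refine limsup_le_of_le (isCoboundedUnder_le_of_le atTop fun N => by positivity) ?_
  filter_upwards [hN, eventually_gt_atTop 0] with N hN hN0
  rwa [inv_mul_le_iff₀ (by exact_mod_cast hN0)]

theorem ContinuousMap.exists_forall_dist_lt_of_forall_lt_eq {X E : Type*} [TopologicalSpace X]
    [T2Space X] [CompactSpace X] [PseudoMetricSpace E] (f : C(ℕ → X, E)) {ε : ℝ}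
    (hε : 0 < ε) : ∃ L, ∀ x y : ℕ → X, (∀ i < L, x i = y i) → dist (f x) (f y) < ε := by
  let bad : ℕ → Set ((ℕ → X) × (ℕ → X)) := fun L =>
    {p | (∀ i < L, p.1 i = p.2 i) ∧ ε ≤ dist (f p.1) (f p.2)}
  have hclosed (L : ℕ) : IsClosed (bad L) := by
    simp only [bad, Set.ofPred_and, Set.ofPred_forall]
    refine (isClosed_iInter fun i => isClosed_iInter fun _ => isClosed_eq ?_ ?_).inter
      (isClosed_le continuous_const
        ((f.continuous.comp continuous_fst).dist (f.continuous.comp continuous_snd)))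
    · exact (continuous_apply i).comp continuous_fst
    · exact (continuous_apply i).comp continuous_snd
  have hempty : Set.univ ∩ ⋂ L, bad L = ∅ := by
    refine Set.eq_empty_of_forall_notMem fun p ⟨_, hp⟩ => ?_
    have heq : p.1 = p.2 := funext fun i => (Set.mem_iInter.1 hp (i + 1)).1 i i.lt_succ_self
    have := (Set.mem_iInter.1 hp 0).2
    rw [heq, dist_self] at this
    exact hε.not_ge this
  have hdir : Directed (· ⊇ ·) bad :=
    Antitone.directed_ge fun L L' hLL' p hp => ⟨fun i hi => hp.1 i (hi.trans_le hLL'), hp.2⟩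
  obtain ⟨L, hL⟩ := isCompact_univ.elim_directed_family_closed bad hclosed hempty hdir
  refine ⟨L, fun x y hxy => not_le.1 fun hε' => ?_⟩
  exact (Set.eq_empty_iff_forall_notMem.1 hL) (x, y) ⟨trivial, hxy, hε'⟩

theorem shift₂_iterate_apply (n : ℕ) (x : ℕ → Fin 2) (k : ℕ) :
    shift₂^[n] x k = x (k + n) := by
  induction n generalizing k with
  | zero => rfl
  | succ n ih => rw [Function.iterate_succ_apply', shift₂, ih, Nat.add_right_comm, Nat.add_assoc]

theorem Function.Periodic.shift₂_iterate {x : ℕ → Fin 2} {Q : ℕ}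
    (h : Function.Periodic x Q) : Function.Periodic (fun n => shift₂^[n] x) Q := fun n => by
  funext k
  simp only [shift₂_iterate_apply, ← Nat.add_assoc, h (k + n)]

theorem sum_dist_shift₂_orbit_le {E : Type*} [NormedAddCommGroup E] (f : C(ℕ → Fin 2, E))
    {L : ℕ} {δ : ℝ} (hf : ∀ x y : ℕ → Fin 2, (∀ i < L, x i = y i) → dist (f x) (f y) < δ)
    (x y : ℕ → Fin 2) (T : Finset ℕ) :
    ∑ t ∈ T, dist (f (shift₂^[t] x)) (f (shift₂^[t] y)) ≤
      #T * δ + 2 * ‖f‖ * ∑ i ∈ range L, (#{t ∈ T | x (i + t) ≠ y (i + t)} : ℝ) := by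
  have hδ : 0 ≤ δ := (dist_nonneg.trans_lt (hf x x fun _ _ => rfl)).le
  have hpoint (t : ℕ) : dist (f (shift₂^[t] x)) (f (shift₂^[t] y)) ≤
      δ + 2 * ‖f‖ * ∑ i ∈ range L, if x (i + t) ≠ y (i + t) then (1 : ℝ) else 0 := by
    by_cases hagree : ∀ i < L, x (i + t) = y (i + t)
    · have := hf (shift₂^[t] x) (shift₂^[t] y) (by simpa only [shift₂_iterate_apply])
      have : 0 ≤ ∑ i ∈ range L, if x (i + t) ≠ y (i + t) then (1 : ℝ) else 0 := by
        positivity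
      nlinarith [norm_nonneg f]
    · obtain ⟨i, hi, hne⟩ := not_forall₂.1 hagree
      have hone : 1 ≤ ∑ i ∈ range L, if x (i + t) ≠ y (i + t) then (1 : ℝ) else 0 := by
        have := single_le_sum (f := fun i => if x (i + t) ≠ y (i + t) then (1 : ℝ) else 0)
          (fun _ _ => by positivity) (mem_range.2 hi)
        rwa [if_pos hne] at this
      nlinarith [f.dist_le_two_norm (shift₂^[t] x) (shift₂^[t] y), norm_nonneg f]
  calc ∑ t ∈ T, dist (f (shift₂^[t] x)) (f (shift₂^[t] y))
      ≤ ∑ t ∈ T, (δ + 2 * ‖f‖ * ∑ i ∈ range L,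
          if x (i + t) ≠ y (i + t) then (1 : ℝ) else 0) := sum_le_sum fun t _ => hpoint t
    _ = #T * δ + 2 * ‖f‖ * ∑ i ∈ range L, (#{t ∈ T | x (i + t) ≠ y (i + t)} : ℝ) := by
      rw [sum_add_distrib, sum_const, nsmul_eq_mul, ← mul_sum, sum_comm]
      simp only [sum_boole]

def muSqTrunc (K : ℕ) : ℕ → Fin 2 :=
  fun k => if ∀ d ∈ Icc 2 K, ¬ d ^ 2 ∣ k + 1 then 1 else 0

theorem periodic_muSqTrunc (K : ℕ) :
    Function.Periodic (muSqTrunc K) (K.factorial ^ 2) := fun k => by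
  have hdvd (d : ℕ) (hd : d ∈ Icc 2 K) : d ^ 2 ∣ K.factorial ^ 2 :=
    pow_dvd_pow_of_dvd (Nat.dvd_factorial (by grind) (mem_Icc.1 hd).2) 2
  simp only [muSqTrunc, Nat.add_right_comm k]
  congr 1
  exact propext <| forall₂_congr fun d hd => by rw [Nat.dvd_add_left (hdvd d hd)]

theorem exists_lt_sq_dvd_of_muSq_ne {K k : ℕ} (h : muSq k ≠ muSqTrunc K k) :
    ∃ d, K < d ∧ d ^ 2 ∣ k + 1 := by
  by_cases htrunc : ∀ d ∈ Icc 2 K, ¬ d ^ 2 ∣ k + 1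
  · have hsq : ¬ Squarefree (k + 1) := fun hsq =>
      h (by simp only [muSq, muSqTrunc, if_pos hsq, if_pos htrunc])
    obtain ⟨p, hp, hpp⟩ : ∃ p, p.Prime ∧ p * p ∣ k + 1 := by
      simpa [Nat.squarefree_iff_prime_squarefree] using hsq
    rw [← sq] at hpp
    exact ⟨p, not_le.1 fun hpK => htrunc p (mem_Icc.2 ⟨hp.two_le, hpK⟩) hpp, hpp⟩
  · have hsq : Squarefree (k + 1) := by_contra fun hsq =>
      h (by simp only [muSq, muSqTrunc, if_neg hsq, if_neg htrunc])
    obtain ⟨d, hd, hdvd⟩ := not_forall₂.1 htrunc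
    have := hsq d (by simpa [sq] using hdvd)
    grind [Nat.isUnit_iff]

theorem card_le_of_forall_exists_sq_dvd {K n : ℕ} {S : Finset ℕ} (hS : S ⊆ Ioc 0 n)
    (h : ∀ m ∈ S, ∃ d, K < d ∧ d ^ 2 ∣ m) : (#S : ℝ) ≤ 2 * n / (K + 1) := by
  have hsub : S ⊆ (Ioo K (n + 1)).biUnion fun d => {m ∈ Ioc 0 n | d ^ 2 ∣ m} := by
    intro m hm
    obtain ⟨d, hKd, hdm⟩ := h m hm
    have hm' := mem_Ioc.1 (hS hm)
    have hdn : d ≤ n :=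
      (Nat.le_self_pow two_ne_zero d).trans ((Nat.le_of_dvd hm'.1 hdm).trans hm'.2)
    exact mem_biUnion.2 ⟨d, mem_Ioo.2 ⟨hKd, Nat.lt_succ_of_le hdn⟩, mem_filter.2 ⟨hS hm, hdm⟩⟩
  calc (#S : ℝ) ≤ ∑ d ∈ Ioo K (n + 1), (#{m ∈ Ioc 0 n | d ^ 2 ∣ m} : ℝ) := by
        exact_mod_cast (card_le_card hsub).trans card_biUnion_le
    _ ≤ ∑ d ∈ Ioo K (n + 1), n * ((d : ℝ) ^ 2)⁻¹ := by
        gcongr with d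
        rw [Nat.Ioc_filter_dvd_card_eq_div, ← div_eq_mul_inv]
        exact_mod_cast Nat.cast_div_le
    _ ≤ n * (2 / (K + 1)) := by
        rw [← mul_sum]
        gcongr
        exact sum_Ioo_inv_sq_le K (n + 1)
    _ = 2 * n / (K + 1) := by ring

theorem card_filter_muSq_ne_muSqTrunc_le (K i N : ℕ) :
    (#{t ∈ Icc 1 N | muSq (i + t) ≠ muSqTrunc K (i + t)} : ℝ) ≤
      2 * (N + i + 1) / (K + 1) := by
  rw [← card_image_of_injective _ (add_right_injective (i + 1))]
  refine (card_le_of_forall_exists_sq_dvd (n := N + i + 1) (fun m hm => ?_)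
    (fun m hm => ?_)).trans (by push_cast; rfl)
  · obtain ⟨t, ht, rfl⟩ := mem_image.1 hm
    grind
  · obtain ⟨t, ht, rfl⟩ := mem_image.1 hm
    obtain ⟨d, hKd, hd⟩ := exists_lt_sq_dvd_of_muSq_ne (mem_filter.1 ht).2
    exact ⟨d, hKd, by rwa [Nat.add_right_comm] at hd⟩

theorem sum_dist_shift₂_orbit_muSq_muSqTrunc_le {E : Type*} [NormedAddCommGroup E]
    (f : C(ℕ → Fin 2, E)) {L : ℕ} {δ : ℝ}
    (hf : ∀ x y : ℕ → Fin 2, (∀ i < L, x i = y i) → dist (f x) (f y) < δ) (K : ℕ)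
    {N : ℕ} (hLN : L ≤ N) :
    ∑ t ∈ Icc 1 N, dist (f (shift₂^[t] muSq)) (f (shift₂^[t] (muSqTrunc K))) ≤
      N * (δ + 8 * ‖f‖ * L / (K + 1)) := by
  have hterm (i : ℕ) (hi : i ∈ range L) :
      (#{t ∈ Icc 1 N | muSq (i + t) ≠ muSqTrunc K (i + t)} : ℝ) ≤ 4 * N / (K + 1) := by
    refine (card_filter_muSq_ne_muSqTrunc_le K i N).trans ?_
    have : (i : ℝ) + 1 ≤ N := by exact_mod_cast (mem_range.1 hi).trans_le hLN
    rw [div_le_div_iff_of_pos_right (by positivity)]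
    linarith
  calc _ ≤ #(Icc 1 N) * δ + 2 * ‖f‖ *
        ∑ i ∈ range L, (#{t ∈ Icc 1 N | muSq (i + t) ≠ muSqTrunc K (i + t)} : ℝ) :=
        sum_dist_shift₂_orbit_le f hf _ _ _
    _ ≤ N * δ + 2 * ‖f‖ * ∑ i ∈ range L, 4 * N / (K + 1 : ℝ) := by
        rw [Nat.card_Icc, Nat.add_sub_cancel]
        gcongr with i hi
        exact hterm i hi
    _ = N * (δ + 8 * ‖f‖ * L / (K + 1)) := by
        rw [sum_const, card_range, nsmul_eq_mul]
        ring

/-- For every continuous `f : {0,1}^ℕ → ℂ`, the sequence `n ↦ f(Sⁿ𝛍²)` is Besicovitch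
almost periodic. -/
theorem besicovitch_of_squarefree_orbit (f : C(ℕ → Fin 2, ℂ)) :
    BesicovitchAlmostPeriodic (fun n => f (shift₂^[n] muSq)) := by
  refine .of_forall_exists_periodic fun ε hε => ?_
  obtain ⟨L, hL⟩ := f.exists_forall_dist_lt_of_forall_lt_eq (half_pos hε)
  obtain ⟨K, hK⟩ := exists_nat_gt (16 * ‖f‖ * L / ε)
  refine ⟨K.factorial ^ 2, by positivity, fun n => f (shift₂^[n] (muSqTrunc K)),
    (periodic_muSqTrunc K).shift₂_iterate.comp f, ?_⟩
  filter_upwards [eventually_ge_atTop L] with N hLN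
  refine (sum_dist_shift₂_orbit_muSq_muSqTrunc_le f hL K hLN).trans ?_
  have hK' : 8 * ‖f‖ * L / (K + 1) ≤ ε / 2 := by
    rw [div_lt_iff₀ hε] at hK
    rw [div_le_iff₀ (by positivity)]
    linarith
  gcongr
  linarith
end

section
/- Let (P_n) and (Q_n) be sequences of Borel probability measures on the circle 𝕋 converging weakly to Borel probability measures P and Q respectively (meaning ∫ φ dP_n → ∫ φ dP and ∫ φ dQ_n → ∫ φ dQ for every continuous φ : 𝕋 → ℝ). Then limsup_{n→∞} G(P_n, Q_n) ≤ G(P, Q). -/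
/-
With `p, q` the densities of `η, ν` with respect to `η + ν`, AM-GM gives `2 √(pq) ≤ f p + q / f`
for every `f > 0`, so `2 G(η, ν) ≤ ∫ f dη + ∫ f⁻¹ dν` for every positive continuous `f`, and for
fixed `f` the right-hand side is continuous under weak convergence. Conversely the bounded function
`f = √((q + δ) / (p + δ))` nearly attains `2 G(η, ν)` as `δ → 0`, and so do its continuous
`L¹(η + ν)`-approximations clamped to the same bounds. Thus `2 G` is an infimum of weakly
continuous functionals, hence upper semicontinuous.
-/

open MeasureTheory Filter Finset

instance : Fact (0 < 2 * Real.pi) := ⟨by positivity⟩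

/-- The affinity `G(η,ν) = ∫ √((dη/dλ)(dν/dλ)) dλ` between two measures on the circle,
computed with the dominating measure `λ = η + ν`. -/
noncomputable def affinity (η ν : Measure (AddCircle (2 * Real.pi))) : ℝ :=
  ∫ x, Real.sqrt ((η.rnDeriv (η + ν) x).toReal * (ν.rnDeriv (η + ν) x).toReal) ∂(η + ν)

open Set Topology

lemma two_mul_sqrt_mul_le_mul_add_inv_mul {a b t : ℝ} (ha : 0 ≤ a) (hb : 0 ≤ b) (ht : 0 < t) :
    2 * √(a * b) ≤ t * a + t⁻¹ * b := by
  have hab : a * b = (t * a) * (t⁻¹ * b) := by field_simp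
  have hta : 0 ≤ t * a := by positivity
  have htb : 0 ≤ t⁻¹ * b := by positivity
  calc 2 * √(a * b) = 2 * √(t * a) * √(t⁻¹ * b) := by rw [hab, Real.sqrt_mul hta, mul_assoc]
    _ ≤ √(t * a) ^ 2 + √(t⁻¹ * b) ^ 2 := two_mul_le_add_sq _ _
    _ = t * a + t⁻¹ * b := by rw [Real.sq_sqrt hta, Real.sq_sqrt htb]

lemma mul_sqrt_div_le_sqrt_mul {a b δ : ℝ} (ha : 0 ≤ a) (hb : 0 ≤ b) (hδ : 0 < δ) :
    a * √((b + δ) / (a + δ)) ≤ √((a + δ) * (b + δ)) := by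
  have haδ : 0 < a + δ := by positivity
  have hsq : (a + δ) * (b + δ) = (a + δ) ^ 2 * ((b + δ) / (a + δ)) := by field_simp
  calc a * √((b + δ) / (a + δ)) ≤ (a + δ) * √((b + δ) / (a + δ)) := by gcongr; linarith
    _ = √((a + δ) * (b + δ)) := by rw [hsq, Real.sqrt_mul (by positivity), Real.sqrt_sq haδ.le]

lemma inv_le_inv_add_mul_abs_sub {a b c : ℝ} (hc : 0 < c) (ha : c ≤ a) (hb : c ≤ b) :
    a⁻¹ ≤ b⁻¹ + (c ^ 2)⁻¹ * |a - b| := by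
  have ha0 : 0 < a := hc.trans_le ha
  have hb0 : 0 < b := hc.trans_le hb
  have hsub : a⁻¹ - b⁻¹ ≤ |a - b| / (a * b) := by
    rw [inv_sub_inv ha0.ne' hb0.ne', div_le_div_iff_of_pos_right (by positivity), abs_sub_comm]
    exact le_abs_self _
  have hden : |a - b| / (a * b) ≤ |a - b| / c ^ 2 := by
    gcongr
    rw [sq]
    gcongr
  rw [← div_eq_inv_mul]
  linarith

section Measure

variable {α : Type*} [MeasurableSpace α]

noncomputable def realRNDeriv (η μ : Measure α) (x : α) : ℝ := (η.rnDeriv μ x).toReal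

variable {η ν μ : Measure α}

lemma realRNDeriv_nonneg (x : α) : 0 ≤ realRNDeriv η μ x := ENNReal.toReal_nonneg

@[fun_prop]
lemma measurable_realRNDeriv : Measurable (realRNDeriv η μ) :=
  (η.measurable_rnDeriv μ).ennreal_toReal

lemma integrable_realRNDeriv [IsFiniteMeasure η] : Integrable (realRNDeriv η μ) μ :=
  Measure.integrable_toReal_rnDeriv

lemma integral_realRNDeriv_mul [SigmaFinite η] [SigmaFinite μ] (hη : η ≪ μ) (f : α → ℝ) :
    ∫ x, realRNDeriv η μ x * f x ∂μ = ∫ x, f x ∂η :=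
  integral_rnDeriv_smul hη

lemma realRNDeriv_le_one [SigmaFinite μ] (h : η ≤ μ) : ∀ᵐ x ∂μ, realRNDeriv η μ x ≤ 1 := by
  filter_upwards [Measure.rnDeriv_le_one_of_le h] with x hx
  exact (ENNReal.toReal_mono ENNReal.one_ne_top hx).trans_eq ENNReal.toReal_one

lemma integrable_sqrt_mul {p q : α → ℝ} (hp : Integrable p μ) (hq : Integrable q μ)
    (hp0 : ∀ x, 0 ≤ p x) (hq0 : ∀ x, 0 ≤ q x) : Integrable (fun x => √(p x * q x)) μ := by
  refine ((hp.add hq).div_const 2).mono'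
    (Real.continuous_sqrt.comp_aestronglyMeasurable (hp.1.mul hq.1))
    (Eventually.of_forall fun x => ?_)
  have := two_mul_sqrt_mul_le_mul_add_inv_mul (hp0 x) (hq0 x) one_pos
  rw [Real.norm_of_nonneg (Real.sqrt_nonneg _)]
  simp only [Pi.add_apply]
  linarith

lemma tendsto_integral_sqrt_add_mul_add [IsFiniteMeasure μ] {p q : α → ℝ} (hp : Integrable p μ)
    (hq : Integrable q μ) (hp0 : ∀ x, 0 ≤ p x) (hq0 : ∀ x, 0 ≤ q x) :
    Tendsto (fun δ : ℝ => ∫ x, √((p x + δ) * (q x + δ)) ∂μ) (𝓝[>] 0)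
      (𝓝 (∫ x, √(p x * q x) ∂μ)) := by
  have hbound := integrable_sqrt_mul (p := fun x => p x + 1) (q := fun x => q x + 1)
    (hp.add (integrable_const 1)) (hq.add (integrable_const 1))
    (fun x => add_nonneg (hp0 x) zero_le_one) (fun x => add_nonneg (hq0 x) zero_le_one)
  refine tendsto_integral_filter_of_dominated_convergence _ ?_ ?_ hbound ?_
  · exact Eventually.of_forall fun δ => Real.continuous_sqrt.comp_aestronglyMeasurable
      ((hp.1.add aestronglyMeasurable_const).mul (hq.1.add aestronglyMeasurable_const))
  · filter_upwards [Ioc_mem_nhdsGT one_pos] with δ hδ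
    refine Eventually.of_forall fun x => ?_
    rw [Real.norm_of_nonneg (Real.sqrt_nonneg _)]
    have hpx := hp0 x
    have hqx := hq0 x
    gcongr <;> linarith [hδ.1, hδ.2]
  · refine Eventually.of_forall fun x => ?_
    have hcont : Continuous fun δ : ℝ => √((p x + δ) * (q x + δ)) := by fun_prop
    simpa using (hcont.tendsto 0).mono_left nhdsWithin_le_nhds

theorem two_mul_integral_sqrt_realRNDeriv_mul_le [SigmaFinite η] [SigmaFinite ν] [SigmaFinite μ]
    (hη : η ≪ μ) (hν : ν ≪ μ) {f : α → ℝ} (hf_pos : ∀ x, 0 < f x) (hf : Integrable f η)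
    (hf_inv : Integrable (fun x => (f x)⁻¹) ν) :
    2 * ∫ x, √(realRNDeriv η μ x * realRNDeriv ν μ x) ∂μ ≤ ∫ x, f x ∂η + ∫ x, (f x)⁻¹ ∂ν := by
  have hηf : Integrable (fun x => realRNDeriv η μ x * f x) μ :=
    (integrable_rnDeriv_smul_iff hη).2 hf
  have hνf : Integrable (fun x => realRNDeriv ν μ x * (f x)⁻¹) μ :=
    (integrable_rnDeriv_smul_iff hν).2 hf_inv
  rw [← integral_realRNDeriv_mul hη, ← integral_realRNDeriv_mul hν, ← integral_add hηf hνf,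
    ← integral_const_mul]
  refine integral_mono_of_nonneg (Eventually.of_forall fun x => by positivity) (hηf.add hνf)
    (Eventually.of_forall fun x => ?_)
  have := two_mul_sqrt_mul_le_mul_add_inv_mul (realRNDeriv_nonneg (η := η) (μ := μ) x)
    (realRNDeriv_nonneg (η := ν) (μ := μ) x) (hf_pos x)
  linarith [mul_comm (f x) (realRNDeriv η μ x), mul_comm (f x)⁻¹ (realRNDeriv ν μ x)]

lemma integral_sqrt_div_le_integral_sqrt_mul [IsFiniteMeasure η] [IsFiniteMeasure ν]
    [IsFiniteMeasure μ] (hη : η ≪ μ) {δ : ℝ} (hδ : 0 < δ) :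
    ∫ x, √((realRNDeriv ν μ x + δ) / (realRNDeriv η μ x + δ)) ∂η ≤
      ∫ x, √((realRNDeriv η μ x + δ) * (realRNDeriv ν μ x + δ)) ∂μ := by
  rw [← integral_realRNDeriv_mul hη]
  refine integral_mono_of_nonneg
    (Eventually.of_forall fun x => mul_nonneg (realRNDeriv_nonneg x) (Real.sqrt_nonneg _))
    (integrable_sqrt_mul (p := fun x => realRNDeriv η μ x + δ)
      (q := fun x => realRNDeriv ν μ x + δ)
      (integrable_realRNDeriv.add (integrable_const δ))
      (integrable_realRNDeriv.add (integrable_const δ))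
      (fun x => add_nonneg (realRNDeriv_nonneg x) hδ.le)
      (fun x => add_nonneg (realRNDeriv_nonneg x) hδ.le))
    (Eventually.of_forall fun x => ?_)
  exact mul_sqrt_div_le_sqrt_mul (realRNDeriv_nonneg x) (realRNDeriv_nonneg x) hδ

theorem integral_add_integral_inv_le_of_mem_Icc [IsFiniteMeasure η] [IsFiniteMeasure ν]
    {f F : α → ℝ} {c C : ℝ} (hc : 0 < c) (hf_meas : Measurable f) (hF_meas : Measurable F)
    (hf : ∀ x, f x ∈ Set.Icc c C) (hF : ∀ᵐ x ∂(η + ν), F x ∈ Set.Icc c C) :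
    ∫ x, f x ∂η + ∫ x, (f x)⁻¹ ∂ν ≤
      ∫ x, F x ∂η + ∫ x, (F x)⁻¹ ∂ν + (1 + (c ^ 2)⁻¹) * ∫ x, |f x - F x| ∂(η + ν) := by
  have hη : η ≤ η + ν := Measure.le_add_right le_rfl
  have hν : ν ≤ η + ν := Measure.le_add_left le_rfl
  have hinv_mem {x : ℝ} (hx : x ∈ Set.Icc c C) : x⁻¹ ∈ Set.Icc C⁻¹ c⁻¹ :=
    ⟨inv_anti₀ (hc.trans_le hx.1) hx.2, inv_anti₀ hc hx.1⟩
  have hf_int : Integrable f (η + ν) :=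
    .of_mem_Icc c C hf_meas.aemeasurable (Eventually.of_forall hf)
  have hf_inv_int : Integrable (fun x => (f x)⁻¹) (η + ν) :=
    .of_mem_Icc C⁻¹ c⁻¹ hf_meas.inv.aemeasurable (Eventually.of_forall fun x => hinv_mem (hf x))
  have hF_int : Integrable F (η + ν) := .of_mem_Icc c C hF_meas.aemeasurable hF
  have hF_inv_int : Integrable (fun x => (F x)⁻¹) (η + ν) :=
    .of_mem_Icc C⁻¹ c⁻¹ hF_meas.inv.aemeasurable (hF.mono fun x hx => hinv_mem hx)
  have hdiff_int : Integrable (fun x => |f x - F x|) (η + ν) := (hf_int.sub hF_int).abs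
  have hfη : ∫ x, f x ∂η ≤ ∫ x, F x ∂η + ∫ x, |f x - F x| ∂η := by
    rw [← integral_add (hF_int.mono_measure hη) (hdiff_int.mono_measure hη)]
    exact integral_mono (hf_int.mono_measure hη)
      ((hF_int.add hdiff_int).mono_measure hη) fun x => by
        linarith [le_abs_self (f x - F x)]
  have hfν : ∫ x, (f x)⁻¹ ∂ν ≤ ∫ x, (F x)⁻¹ ∂ν + (c ^ 2)⁻¹ * ∫ x, |f x - F x| ∂ν := by
    rw [← integral_const_mul, ← integral_add (hF_inv_int.mono_measure hν)
      ((hdiff_int.const_mul _).mono_measure hν)]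
    refine integral_mono_ae (hf_inv_int.mono_measure hν)
      ((hF_inv_int.add (hdiff_int.const_mul _)).mono_measure hν) ?_
    filter_upwards [ae_mono hν hF] with x hx
    exact inv_le_inv_add_mul_abs_sub hc (hf x).1 hx.1
  have hsplit := integral_add_measure (hdiff_int.mono_measure hη) (hdiff_int.mono_measure hν)
  have hdη : 0 ≤ ∫ x, |f x - F x| ∂η := integral_nonneg fun x => abs_nonneg _
  have hdν : 0 ≤ ∫ x, |f x - F x| ∂ν := integral_nonneg fun x => abs_nonneg _
  have hc2 : 0 ≤ (c ^ 2)⁻¹ := by positivity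
  nlinarith

end Measure

theorem exists_measurable_integral_add_integral_inv_lt {α : Type*} [MeasurableSpace α]
    (η ν : Measure α) [IsFiniteMeasure η] [IsFiniteMeasure ν] {ε : ℝ} (hε : 0 < ε) :
    ∃ F : α → ℝ, Measurable F ∧ ∃ c C, 0 < c ∧ c ≤ C ∧ (∀ᵐ x ∂(η + ν), F x ∈ Set.Icc c C) ∧
      ∫ x, F x ∂η + ∫ x, (F x)⁻¹ ∂ν <
        2 * ∫ x, √(realRNDeriv η (η + ν) x * realRNDeriv ν (η + ν) x) ∂(η + ν) + ε := by
  set μ := η + ν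
  set p := realRNDeriv η μ
  set q := realRNDeriv ν μ
  obtain ⟨δ, hlt, hδ⟩ : ∃ δ, ∫ x, √((p x + δ) * (q x + δ)) ∂μ < ∫ x, √(p x * q x) ∂μ + ε / 2
      ∧ 0 < δ :=
    (((tendsto_integral_sqrt_add_mul_add integrable_realRNDeriv integrable_realRNDeriv
      realRNDeriv_nonneg realRNDeriv_nonneg).eventually (gt_mem_nhds (by linarith))).and
      self_mem_nhdsWithin).exists
  have hη : η ≪ μ := Measure.absolutelyContinuous_of_le (Measure.le_add_right le_rfl)
  have hν : ν ≪ μ := Measure.absolutelyContinuous_of_le (Measure.le_add_left le_rfl)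
  -- `√(q / p)` itself would be optimal; the shift by `δ` keeps it away from `0` and `∞`.
  refine ⟨fun x => √((q x + δ) / (p x + δ)), by fun_prop, √(δ / (1 + δ)), √((1 + δ) / δ),
    Real.sqrt_pos.2 (by positivity), Real.sqrt_le_sqrt ?_, ?_, ?_⟩
  · exact ((div_le_one (by positivity)).2 (by linarith)).trans ((one_le_div hδ).2 (by linarith))
  · filter_upwards [realRNDeriv_le_one (Measure.le_add_right le_rfl),
      realRNDeriv_le_one (Measure.le_add_left le_rfl)] with x hp1 hq1
    have := realRNDeriv_nonneg (η := η) (μ := μ) x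
    have := realRNDeriv_nonneg (η := ν) (μ := μ) x
    constructor <;> gcongr <;> linarith
  · have hinv : ∀ x, (√((q x + δ) / (p x + δ)))⁻¹ = √((p x + δ) / (q x + δ)) := fun x => by
      rw [← Real.sqrt_inv, inv_div]
    have h1 := integral_sqrt_div_le_integral_sqrt_mul (ν := ν) hη hδ
    have h2 := integral_sqrt_div_le_integral_sqrt_mul (ν := η) hν hδ
    beta_reduce
    simp only [hinv]
    simp only [mul_comm (realRNDeriv ν μ _ + δ)] at h2
    linarith

section Continuous

variable {α : Type*} [MeasurableSpace α] [TopologicalSpace α]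

theorem exists_continuous_mem_Icc_integral_abs_sub_le [NormalSpace α] [BorelSpace α]
    {μ : Measure α} [IsFiniteMeasure μ] [μ.WeaklyRegular] {F : α → ℝ} (hF : Measurable F)
    {c C : ℝ} (hcC : c ≤ C) (hF_mem : ∀ᵐ x ∂μ, F x ∈ Set.Icc c C) {ε : ℝ} (hε : 0 < ε) :
    ∃ f : α → ℝ, Continuous f ∧ (∀ x, f x ∈ Set.Icc c C) ∧ ∫ x, |f x - F x| ∂μ ≤ ε := by
  have hF_int : Integrable F μ := .of_mem_Icc c C hF.aemeasurable hF_mem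
  obtain ⟨g, hg_close, hg_int⟩ := hF_int.exists_boundedContinuous_integral_sub_le hε
  refine ⟨fun x => projIcc c C hcC (g x), continuous_subtype_val.comp
    (continuous_projIcc.comp g.continuous), fun x => (projIcc c C hcC (g x)).2, ?_⟩
  refine le_trans (integral_mono_of_nonneg (Eventually.of_forall fun x => abs_nonneg _)
    (hF_int.sub hg_int).norm ?_) hg_close
  filter_upwards [hF_mem] with x hx
  calc |(projIcc c C hcC (g x) : ℝ) - F x|
      = |(projIcc c C hcC (g x) : ℝ) - projIcc c C hcC (F x)| := by rw [projIcc_of_mem hcC hx]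
    _ ≤ |g x - F x| := abs_projIcc_sub_projIcc hcC
    _ = ‖F x - g x‖ := by rw [Real.norm_eq_abs, abs_sub_comm]

theorem exists_continuous_integral_add_integral_inv_lt_of_mem_Icc [NormalSpace α] [BorelSpace α]
    {η ν : Measure α} [IsFiniteMeasure η] [IsFiniteMeasure ν] [(η + ν).WeaklyRegular]
    {F : α → ℝ} (hF : Measurable F) {c C : ℝ}
    (hc : 0 < c) (hcC : c ≤ C) (hF_mem : ∀ᵐ x ∂(η + ν), F x ∈ Set.Icc c C) {ε : ℝ} (hε : 0 < ε) :
    ∃ f : α → ℝ, Continuous f ∧ (∀ x, 0 < f x) ∧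
      ∫ x, f x ∂η + ∫ x, (f x)⁻¹ ∂ν < ∫ x, F x ∂η + ∫ x, (F x)⁻¹ ∂ν + ε := by
  have hK : 0 < 1 + (c ^ 2)⁻¹ := by positivity
  obtain ⟨f, hf_cont, hf_mem, hf_close⟩ :=
    exists_continuous_mem_Icc_integral_abs_sub_le hF hcC hF_mem (div_pos hε (mul_pos two_pos hK))
  refine ⟨f, hf_cont, fun x => hc.trans_le (hf_mem x).1, ?_⟩
  have hle := integral_add_integral_inv_le_of_mem_Icc hc hf_cont.measurable hF hf_mem hF_mem
  have herr : (1 + (c ^ 2)⁻¹) * ∫ x, |f x - F x| ∂(η + ν) ≤ ε / 2 := by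
    calc (1 + (c ^ 2)⁻¹) * ∫ x, |f x - F x| ∂(η + ν)
        ≤ (1 + (c ^ 2)⁻¹) * (ε / (2 * (1 + (c ^ 2)⁻¹))) := by gcongr
      _ = ε / 2 := by field_simp
  linarith

end Continuous

local notation "𝕋" => AddCircle (2 * Real.pi)

lemma affinity_eq_integral_sqrt_realRNDeriv_mul (η ν : Measure 𝕋) :
    affinity η ν = ∫ x, √(realRNDeriv η (η + ν) x * realRNDeriv ν (η + ν) x) ∂(η + ν) :=
  rfl

theorem two_mul_affinity_le (η ν : Measure 𝕋) [IsFiniteMeasure η] [IsFiniteMeasure ν] {f : 𝕋 → ℝ}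
    (hf : Continuous f) (hf_pos : ∀ x, 0 < f x) :
    2 * affinity η ν ≤ ∫ x, f x ∂η + ∫ x, (f x)⁻¹ ∂ν :=
  have hf_inv : Continuous fun x => (f x)⁻¹ := hf.inv₀ fun x => (hf_pos x).ne'
  two_mul_integral_sqrt_realRNDeriv_mul_le
    (Measure.absolutelyContinuous_of_le (Measure.le_add_right le_rfl))
    (Measure.absolutelyContinuous_of_le (Measure.le_add_left le_rfl)) hf_pos
    (hf.integrable_of_hasCompactSupport (.of_compactSpace f))
    (hf_inv.integrable_of_hasCompactSupport (.of_compactSpace _))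

theorem exists_continuous_integral_add_integral_inv_lt (η ν : Measure 𝕋) [IsFiniteMeasure η]
    [IsFiniteMeasure ν] {ε : ℝ} (hε : 0 < ε) :
    ∃ f : 𝕋 → ℝ, Continuous f ∧ (∀ x, 0 < f x) ∧
      ∫ x, f x ∂η + ∫ x, (f x)⁻¹ ∂ν < 2 * affinity η ν + ε := by
  obtain ⟨F, hF, c, C, hc, hcC, hF_mem, hF_lt⟩ :=
    exists_measurable_integral_add_integral_inv_lt η ν (half_pos hε)
  obtain ⟨f, hf, hf_pos, hf_lt⟩ :=
    exists_continuous_integral_add_integral_inv_lt_of_mem_Icc hF hc hcC hF_mem (half_pos hε)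
  exact ⟨f, hf, hf_pos, by rw [affinity_eq_integral_sqrt_realRNDeriv_mul]; linarith⟩

/-- Coquet–Kamae–Mendès-France: the affinity is upper semicontinuous along weakly
convergent sequences of probability measures on the circle. -/
theorem affinity_limsup_le_of_weak_convergence
    (P Q : ℕ → Measure (AddCircle (2 * Real.pi)))
    (hP : ∀ n, IsProbabilityMeasure (P n)) (hQ : ∀ n, IsProbabilityMeasure (Q n))
    (Plim Qlim : Measure (AddCircle (2 * Real.pi)))
    (hPlim : IsProbabilityMeasure Plim) (hQlim : IsProbabilityMeasure Qlim)
    (hPconv : ∀ φ : C(AddCircle (2 * Real.pi), ℝ),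
      Tendsto (fun n => ∫ x, φ x ∂(P n)) atTop (nhds (∫ x, φ x ∂Plim)))
    (hQconv : ∀ φ : C(AddCircle (2 * Real.pi), ℝ),
      Tendsto (fun n => ∫ x, φ x ∂(Q n)) atTop (nhds (∫ x, φ x ∂Qlim))) :
    Filter.limsup (fun n => affinity (P n) (Q n)) atTop ≤ affinity Plim Qlim := by
  refine le_of_forall_pos_le_add fun ε hε => ?_
  obtain ⟨f, hf, hf_pos, hf_lt⟩ := exists_continuous_integral_add_integral_inv_lt Plim Qlim hε
  have hlim : Tendsto (fun n => ∫ x, f x ∂(P n) + ∫ x, (f x)⁻¹ ∂(Q n)) atTop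
      (𝓝 (∫ x, f x ∂Plim + ∫ x, (f x)⁻¹ ∂Qlim)) :=
    (hPconv ⟨f, hf⟩).add (hQconv ⟨_, hf.inv₀ fun x => (hf_pos x).ne'⟩)
  refine limsup_le_of_le (isCoboundedUnder_le_of_le atTop (x := 0) fun n => ?_) ?_
  · exact integral_nonneg fun x => Real.sqrt_nonneg _
  filter_upwards [hlim.eventually (gt_mem_nhds hf_lt)] with n hn
  have := two_mul_affinity_le (P n) (Q n) hf hf_pos
  linarith
end

section
/- Let (X, 𝒜, μ) be a probability space and let 𝒞 ⊆ 𝒜 be a sub-σ-algebra which is (i) non-atomic modulo μ: every 𝒞-measurable set A with μ(A) > 0 contains a 𝒞-measurable subset B with 0 < μ(B) < μ(A); and (ii) proper: there exists a bounded 𝒜-measurable function which is not μ-a.e. equal to any 𝒞-measurable function. Then the orthogonal complement of L²(X, 𝒞, μ) inside L²(X, 𝒜, μ) is infinite-dimensional. -/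
open MeasureTheory Filter Finset Function
open scoped InnerProductSpace

/-!
Properness of `𝒞` gives a nonzero `h ⊥ L²(𝒞)`, and multiplying `h` by the indicator of a
`𝒞`-set keeps it orthogonal to `L²(𝒞)`, because multiplication by such an indicator is
self-adjoint and preserves `L²(𝒞)`. On the `𝒞`-set `A = {E[h² | 𝒞] > 0}` every `𝒞`-subset of
positive measure carries a positive part of `‖h‖²`. Non-atomicity yields infinitely many disjoint
such subsets `Bᵢ` (the differences of a strictly shrinking chain), and the `1_{Bᵢ} h` are then
infinitely many pairwise orthogonal nonzero vectors of `L²(𝒞)ᗮ`.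
-/

namespace MeasureTheory

variable {X : Type*} {m m0 : MeasurableSpace X} {μ : Measure X}

theorem exists_seq_pairwise_disjoint_pos_of_nonatomic
    (hnonatomic : ∀ A : Set X, MeasurableSet[m] A → 0 < μ A →
      ∃ B : Set X, MeasurableSet[m] B ∧ B ⊆ A ∧ 0 < μ B ∧ μ B < μ A)
    {A : Set X} (hA : MeasurableSet[m] A) (hμA : 0 < μ A) :
    ∃ B : ℕ → Set X, (∀ i, MeasurableSet[m] (B i)) ∧ (∀ i, B i ⊆ A) ∧ (∀ i, 0 < μ (B i)) ∧
      Pairwise (Disjoint on B) := by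
  choose! shrink hshrink_meas hshrink_sub hshrink_pos hshrink_lt using hnonatomic
  set C : ℕ → Set X := fun k => shrink^[k] A
  have hC : ∀ k, MeasurableSet[m] (C k) ∧ 0 < μ (C k) := by
    intro k
    induction k with
    | zero => exact ⟨hA, hμA⟩
    | succ k ih =>
      simp only [C, Function.iterate_succ_apply']
      exact ⟨hshrink_meas _ ih.1 ih.2, hshrink_pos _ ih.1 ih.2⟩
  have hC_succ : ∀ k, C (k + 1) ⊆ C k ∧ μ (C (k + 1)) < μ (C k) := by
    intro k
    simp only [C, Function.iterate_succ_apply']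
    exact ⟨hshrink_sub _ (hC k).1 (hC k).2, hshrink_lt _ (hC k).1 (hC k).2⟩
  have hC_anti : Antitone C := antitone_nat_of_succ_le fun k => (hC_succ k).1
  refine ⟨fun k => C k \ C (k + 1), fun k => (hC k).1.diff (hC (k + 1)).1,
    fun k => Set.sdiff_subset.trans (hC_anti (Nat.zero_le k)),
    fun k => (tsub_pos_of_lt (hC_succ k).2).trans_le le_measure_sdiff,
    (pairwise_disjoint_on _).2 fun i j hij => ?_⟩
  exact Set.disjoint_sdiff_left.mono_right (Set.sdiff_subset.trans (hC_anti hij))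

theorem exists_measurableSet_forall_subset_setIntegral_pos (hm : m ≤ m0)
    [SigmaFinite (μ.trim hm)] {g : X → ℝ} (hg_nonneg : 0 ≤ᵐ[μ] g) (hg_int : Integrable g μ)
    (hg_pos : 0 < ∫ x, g x ∂μ) :
    ∃ A, MeasurableSet[m] A ∧ 0 < μ A ∧
      ∀ B, MeasurableSet[m] B → B ⊆ A → 0 < μ B → 0 < ∫ x in B, g x ∂μ := by
  have hφ_nonneg : 0 ≤ᵐ[μ] μ[g|m] := condExp_nonneg hg_nonneg
  refine ⟨{x | 0 < μ[g|m] x}, stronglyMeasurable_condExp.measurable measurableSet_Ioi, ?_,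
    fun B hB hBA hμB => ?_⟩
  · refine pos_iff_ne_zero.2 fun h0 => hg_pos.not_ge ?_
    rw [← integral_condExp hm]
    refine integral_nonpos_of_ae ?_
    filter_upwards [measure_eq_zero_iff_ae_notMem.1 h0] with x hx
    exact not_lt.1 hx
  · rw [← setIntegral_condExp hm hg_int hB, setIntegral_pos_iff_support_of_nonneg_ae
      (ae_restrict_of_ae hφ_nonneg) integrable_condExp.integrableOn,
      Set.inter_eq_self_of_subset_right (s := support _) fun x hx => (hBA hx).ne']
    exact hμB

namespace Lp

section Indicator

variable {E : Type*} [NormedAddCommGroup E] {p : ENNReal} {s t : Set X}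

noncomputable def indicator (hs : MeasurableSet s) (f : Lp E p μ) : Lp E p μ :=
  ((Lp.memLp f).indicator hs).toLp (s.indicator f)

theorem coeFn_indicator (hs : MeasurableSet s) (f : Lp E p μ) :
    indicator hs f =ᵐ[μ] s.indicator f :=
  MemLp.coeFn_toLp _

theorem indicator_mem_lpMeas {𝕜 : Type*} [RCLike 𝕜] [NormedSpace 𝕜 E]
    (hm : m ≤ m0) (hs : MeasurableSet[m] s) {f : Lp E p μ} (hf : f ∈ lpMeas E 𝕜 m p μ) :
    indicator (hm s hs) f ∈ lpMeas E 𝕜 m p μ := by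
  obtain ⟨g, hg, hfg⟩ := mem_lpMeas_iff_aestronglyMeasurable.1 hf
  exact mem_lpMeas_iff_aestronglyMeasurable.2
    ⟨s.indicator g, hg.indicator hs, (coeFn_indicator _ f).trans hfg.indicator⟩

end Indicator

section Inner

variable {𝕜 E : Type*} [RCLike 𝕜] [NormedAddCommGroup E] [InnerProductSpace 𝕜 E] {s t : Set X}

theorem inner_indicator_left (hs : MeasurableSet s) (f g : Lp E 2 μ) :
    ⟪indicator hs f, g⟫_𝕜 = ∫ x in s, ⟪f x, g x⟫_𝕜 ∂μ := by
  rw [L2.inner_def, ← integral_indicator hs]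
  refine integral_congr_ae ?_
  filter_upwards [coeFn_indicator hs f] with x hx
  by_cases hxs : x ∈ s <;> simp [hx, hxs]

theorem inner_indicator_right (hs : MeasurableSet s) (f g : Lp E 2 μ) :
    ⟪f, indicator hs g⟫_𝕜 = ∫ x in s, ⟪f x, g x⟫_𝕜 ∂μ := by
  rw [L2.inner_def, ← integral_indicator hs]
  refine integral_congr_ae ?_
  filter_upwards [coeFn_indicator hs g] with x hx
  by_cases hxs : x ∈ s <;> simp [hx, hxs]

theorem inner_indicator_indicator (hs : MeasurableSet s) (ht : MeasurableSet t)
    (f g : Lp E 2 μ) :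
    ⟪indicator hs f, indicator ht g⟫_𝕜 = ∫ x in s ∩ t, ⟪f x, g x⟫_𝕜 ∂μ := by
  rw [inner_indicator_left, ← setIntegral_indicator ht]
  refine setIntegral_congr_ae₀ hs.nullMeasurableSet ?_
  filter_upwards [coeFn_indicator ht g] with x hx _
  by_cases hxt : x ∈ t <;> simp [hx, hxt]

theorem indicator_mem_orthogonal_lpMeas (hm : m ≤ m0) (hs : MeasurableSet[m] s)
    {f : Lp E 2 μ} (hf : f ∈ (lpMeas E 𝕜 m 2 μ)ᗮ) :
    indicator (hm s hs) f ∈ (lpMeas E 𝕜 m 2 μ)ᗮ := by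
  rw [Submodule.mem_orthogonal] at hf ⊢
  intro u hu
  rw [inner_indicator_right, ← inner_indicator_left (hm s hs)]
  exact hf _ (indicator_mem_lpMeas hm hs hu)

end Inner

end Lp

theorem lpMeas_ne_top_of_not_aestronglyMeasurable {𝕜 E : Type*} [RCLike 𝕜]
    [NormedAddCommGroup E] [NormedSpace 𝕜 E] {p : ENNReal} {f : X → E} (hf : MemLp f p μ)
    (hfm : ¬AEStronglyMeasurable[m] f μ) : lpMeas E 𝕜 m p μ ≠ ⊤ := by
  intro htop
  have hf_mem : hf.toLp f ∈ lpMeas E 𝕜 m p μ := htop ▸ Submodule.mem_top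
  exact hfm ((mem_lpMeas_iff_aestronglyMeasurable.1 hf_mem).congr hf.coeFn_toLp)

end MeasureTheory

/-- Rokhlin's lemma: if `𝒞` is a proper, non-atomic (mod `μ`) sub-σ-algebra of a
probability space `(X, 𝒜, μ)`, then the orthogonal complement of `L²(X, 𝒞, μ)` inside
`L²(X, 𝒜, μ)` is infinite-dimensional. -/
theorem orthocomplement_of_proper_nonatomic_subalgebra_infinite_dimensional
    {X : Type*} {mX : MeasurableSpace X} (μ : Measure X) [IsProbabilityMeasure μ]
    (m : MeasurableSpace X) (hm : m ≤ mX)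
    (hnonatomic : ∀ A : Set X, MeasurableSet[m] A → 0 < μ A →
      ∃ B : Set X, MeasurableSet[m] B ∧ B ⊆ A ∧ 0 < μ B ∧ μ B < μ A)
    (hproper : ∃ f : X → ℝ, Measurable[mX] f ∧ (∃ C : ℝ, ∀ x, |f x| ≤ C) ∧
      ¬∃ g : X → ℝ, Measurable[m] g ∧ f =ᵐ[μ] g) :
    ¬FiniteDimensional ℝ ((@lpMeas X ℝ ℝ _ _ _ m mX 2 μ)ᗮ : Submodule ℝ (Lp ℝ 2 μ)) := by
  -- otherwise `Lp ℝ 2 μ` below would be elaborated over the later local instance `m`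
  let _ : MeasurableSpace X := mX
  have : Fact (m ≤ mX) := ⟨hm⟩
  obtain ⟨f, hf_meas, ⟨C, hfC⟩, hf_not⟩ := hproper
  have hK : lpMeas ℝ ℝ m 2 μ ≠ ⊤ :=
    lpMeas_ne_top_of_not_aestronglyMeasurable
      (.of_bound hf_meas.aestronglyMeasurable C (ae_of_all _ fun x => hfC x))
      fun hfm => hf_not ⟨hfm.mk f, hfm.stronglyMeasurable_mk.measurable, hfm.ae_eq_mk⟩
  obtain ⟨h, hh_orth, hh_ne⟩ :=
    (Submodule.ne_bot_iff _).1 (Submodule.orthogonal_eq_bot_iff.not.2 hK)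
  obtain ⟨A, hA_meas, hA_pos, hA⟩ := exists_measurableSet_forall_subset_setIntegral_pos hm
    (g := fun x => ⟪h x, h x⟫_ℝ) (ae_of_all _ fun _ => real_inner_self_nonneg)
    (L2.integrable_inner h h) (by rw [← L2.inner_def]; exact real_inner_self_pos.2 hh_ne)
  obtain ⟨B, hB_meas, hB_sub, hB_pos, hB_disj⟩ :=
    exists_seq_pairwise_disjoint_pos_of_nonatomic hnonatomic hA_meas hA_pos
  let v : ℕ → (lpMeas ℝ ℝ m 2 μ)ᗮ := fun i =>
    ⟨Lp.indicator (hm _ (hB_meas i)) h, Lp.indicator_mem_orthogonal_lpMeas hm (hB_meas i) hh_orth⟩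
  intro _
  refine Module.Finite.not_linearIndependent_of_infinite v
    (linearIndependent_of_ne_zero_of_inner_eq_zero (𝕜 := ℝ) (fun i => ?_) fun i j hij => ?_)
  · refine real_inner_self_pos.1 ?_
    rw [Submodule.coe_inner, Lp.inner_indicator_indicator, Set.inter_self]
    exact hA _ (hB_meas i) (hB_sub i) (hB_pos i)
  · change ⟪v i, v j⟫_ℝ = 0
    rw [Submodule.coe_inner, Lp.inner_indicator_indicator, (hB_disj hij).inter_eq,
      Measure.restrict_empty, integral_zero_measure]
end
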